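/- For any even positive integer k, in H_t = Q[t]⟨x,y⟩ one has Σ_{j=0}^{k} (−1)^j (z₂ z₁^j ⧢_t z₂ z₁^{k−j}) = 2[ Σ_{a₁+⋯+a_{k+2}=1, a_i≥0} (a_{k+2}+1) z_{a_{k+2}+2} z_{a₁+1} ⋯ z_{a_{k+1}+1} + t Σ_{i=0}^{k−1} (2(−1)^i − 1) z₂ z₁^i z₃ z₁^{k−i−1} − 3t z₄ z₁^k ], where z_n = x^{n−1} y. -/

import Mathlib

open scoped BigOperators

noncomputable section

abbrev Rt : Type := Polynomial ℚ
abbrev Ht : Type := MonoidAlgebra Rt (FreeMonoid (Fin 2))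

/-- The word `l` as an element of `H_t`. -/
def wd (l : List (Fin 2)) : Ht :=
  MonoidAlgebra.of Rt (FreeMonoid (Fin 2)) (FreeMonoid.ofList l)

/-- The letter `x`. -/
def wx : Ht := wd [0]
/-- The letter `y`. -/
def wy : Ht := wd [1]

/-- ρ(x) = 0, ρ(y) = t·x. -/
def ρt : Fin 2 → Ht := fun a => if a = 1 then (Polynomial.X : Rt) • wx else 0

/-- δ: indicator of the empty word. -/
def δw : List (Fin 2) → Rt := fun w => if w = [] then 1 else 0

/-- The t-shuffle product on words. -/
def tshW : List (Fin 2) → List (Fin 2) → Ht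
  | [], w => wd w
  | a :: w, [] => wd (a :: w)
  | a :: w1, b :: w2 =>
      wd [a] * tshW w1 (b :: w2) + wd [b] * tshW (a :: w1) w2
        - δw w1 • (ρt a * wd (b :: w2)) - δw w2 • (ρt b * wd (a :: w1))
  termination_by w1 w2 => w1.length + w2.length

/-- The ordinary shuffle product (t = 0 case) on words. -/
def shW : List (Fin 2) → List (Fin 2) → Ht
  | [], w => wd w
  | a :: w, [] => wd (a :: w)
  | a :: w1, b :: w2 =>
      wd [a] * shW w1 (b :: w2) + wd [b] * shW (a :: w1) w2
  termination_by w1 w2 => w1.length + w2.length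

/-- The t-shuffle product on `H_t`, extended Q[t]-bilinearly. -/
def tshH (u v : Ht) : Ht :=
  u.coeff.sum fun w1 c1 => v.coeff.sum fun w2 c2 =>
    (c1 * c2) • tshW (FreeMonoid.toList w1) (FreeMonoid.toList w2)

/-- The ordinary shuffle product on `H_t`, extended Q[t]-bilinearly. -/
def shH (u v : Ht) : Ht :=
  u.coeff.sum fun w1 c1 => v.coeff.sum fun w2 c2 =>
    (c1 * c2) • shW (FreeMonoid.toList w1) (FreeMonoid.toList w2)

/-- `z_n = x^{n-1} y`. -/
def zzw (n : ℕ) : Ht := wx ^ (n - 1) * wy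

/-
Write u_j = z₂z₁^j = x y^(j+1). Both arguments of u_a ⧢_t u_b start with x and ρ(x) = 0, so
u_a ⧢_t u_b = x G(a,b) + x G(b,a) with G(a,b) = y^(a+1) ⧢_t x y^(b+1); for even k the
alternating sum is invariant under j ↦ k - j, so it equals 2x Σ_{a+b=k} (-1)^a G(a,b).
The products F(a,b) = y^(a+1) ⧢_t y^(b+1) satisfy a Pascal recursion whose only boundary terms
are (y - t x) y^(m+1), so their alternating antidiagonal sums telescope to
(1 + (-1)^n) (y - t x) y^(n+1). Peeling off the leading y's of G(a,b) expresses
Σ (-1)^a G(a,b) through these sums, and expanding y - t x yields the right-hand side term by term.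
-/

open Finset

theorem List.ofFn_update_const {α : Type*} {n : ℕ} (i : Fin n) (a b : α) :
    List.ofFn (Function.update (fun _ => b) i a) =
      List.replicate i b ++ a :: List.replicate (n - 1 - i) b := by
  apply List.ext_getElem
  · simp only [List.length_ofFn, List.length_append, List.length_replicate, List.length_cons]
    omega
  · intro j h₁ h₂
    rw [List.getElem_ofFn, List.getElem_append]
    rcases lt_trichotomy j i with hj | rfl | hj
    · simp [hj, Fin.ext_iff, hj.ne]
    · simp
    · simp [hj.ne', Fin.ext_iff, not_lt.mpr hj.le, List.getElem_cons, Nat.sub_ne_zero_of_lt hj]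

theorem Finset.Nat.sum_antidiagonalTuple_one_right {M : Type*} [AddCommMonoid M] (n : ℕ)
    (f : (Fin n → ℕ) → M) :
    ∑ a ∈ Nat.antidiagonalTuple n 1, f a = ∑ i, f (Pi.single i 1) := by
  have hinj : Function.Injective fun i : Fin n => (Pi.single i 1 : Fin n → ℕ) := fun i j h => by
    simpa [Pi.single_apply] using congrFun h i
  rw [← sum_image fun i _ j _ h => hinj h]
  congr 1
  ext a
  simp only [Nat.mem_antidiagonalTuple, mem_image, mem_univ, true_and]
  constructor
  · intro h
    obtain ⟨i, hi⟩ := (Finsupp.sum_eq_one_iff (Finsupp.equivFunOnFinite.symm a)).1 (by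
      rwa [Finsupp.sum_fintype _ _ fun _ => rfl])
    refine ⟨i, ?_⟩
    simpa [Finsupp.single_eq_pi_single] using (congrArg Finsupp.equivFunOnFinite hi).symm
  · rintro ⟨i, rfl⟩
    simp

section AlternatingSums

variable {R M : Type*} [CommRing R] [AddCommGroup M] [Module R M]

theorem sum_antidiagonal_neg_one_pow_smul_of_pascal (T : M →ₗ[R] M) (F : ℕ → ℕ → M)
    (β : ℕ → M)
    (h₀ : F 0 0 = (2 : R) • β 0)
    (hl : ∀ b, F 0 (b + 1) = β (b + 1) + T (F 0 b))
    (hr : ∀ a, F (a + 1) 0 = β (a + 1) + T (F a 0))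
    (hs : ∀ a b, F (a + 1) (b + 1) = T (F a (b + 1)) + T (F (a + 1) b)) :
    ∀ n, ∑ p ∈ antidiagonal n, (-1 : R) ^ p.1 • F p.1 p.2 = (1 + (-1 : R) ^ n) • β n
  | 0 => by simp [h₀, one_add_one_eq_two]
  | 1 => by simp [Nat.sum_antidiagonal_succ, hl, hr]; abel
  | n + 2 => by
    -- The interior terms of row n + 2 are T applied to row n + 1 twice, once with each sign:
    -- write row n + 1 by splitting off its first and its last term.
    set S := ∑ p ∈ antidiagonal (n + 1), (-1 : R) ^ p.1 • F p.1 p.2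
    have h₁ : S = F 0 (n + 1) +
        ∑ p ∈ antidiagonal n, (-1 : R) ^ (p.1 + 1) • F (p.1 + 1) p.2 := by
      simp [S, Nat.sum_antidiagonal_succ]
    have h₂ : S = (-1 : R) ^ (n + 1) • F (n + 1) 0 +
        ∑ p ∈ antidiagonal n, (-1 : R) ^ p.1 • F p.1 (p.2 + 1) :=
      Nat.sum_antidiagonal_succ'
    calc ∑ p ∈ antidiagonal (n + 2), (-1 : R) ^ p.1 • F p.1 p.2
        = (1 + (-1 : R) ^ (n + 2)) • β (n + 2) +
            T (F 0 (n + 1) + ∑ p ∈ antidiagonal n, (-1 : R) ^ (p.1 + 1) • F (p.1 + 1) p.2) -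
            T ((-1 : R) ^ (n + 1) • F (n + 1) 0 +
              ∑ p ∈ antidiagonal n, (-1 : R) ^ p.1 • F p.1 (p.2 + 1)) := by
          rw [Nat.sum_antidiagonal_succ, Nat.sum_antidiagonal_succ']
          simp only [hl, hr, hs, map_add, map_neg, map_sum, map_smul, smul_add,
            sum_add_distrib, pow_succ, mul_neg_one, neg_neg, neg_smul, sum_neg_distrib, add_smul,
            one_smul, pow_zero]
          abel
      _ = (1 + (-1 : R) ^ (n + 2)) • β (n + 2) := by
          rw [← h₁, ← h₂, add_sub_cancel_right]

theorem sum_antidiagonal_neg_one_pow_smul_of_succ_left (T : M →ₗ[R] M) (G v : ℕ → ℕ → M)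
    (c : ℕ → M) (h₀ : ∀ b, G 0 b = c b + v 0 b)
    (hs : ∀ a b, G (a + 1) b = T (G a b) + v (a + 1) b) (n : ℕ) :
    ∑ p ∈ antidiagonal n, (-1 : R) ^ p.1 • G p.1 p.2 =
      ∑ q ∈ antidiagonal n, (-1 : R) ^ q.1 •
        (T ^ q.1) (c q.2 + ∑ p ∈ antidiagonal q.2, (-1 : R) ^ p.1 • v p.1 p.2) := by
  induction n with
  | zero => simp [h₀]
  | succ n ih =>
    calc ∑ p ∈ antidiagonal (n + 1), (-1 : R) ^ p.1 • G p.1 p.2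
        = c (n + 1) + ∑ p ∈ antidiagonal (n + 1), (-1 : R) ^ p.1 • v p.1 p.2
          - T (∑ p ∈ antidiagonal n, (-1 : R) ^ p.1 • G p.1 p.2) := by
          simp only [Nat.sum_antidiagonal_succ, h₀, hs, map_sum, map_smul, pow_succ, mul_neg_one,
            neg_smul, smul_add, sum_add_distrib, sum_neg_distrib, pow_zero, one_smul]
          abel
      _ = _ := by
          conv_rhs => rw [Nat.sum_antidiagonal_succ]
          rw [ih, Nat.sum_antidiagonal_succ (n := n)]
          simp only [map_sum, map_smul, pow_succ', neg_one_mul, neg_smul, sum_neg_distrib,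
            pow_zero, one_smul, Module.End.one_apply, Module.End.mul_apply]
          abel

theorem sum_range_neg_one_pow_smul_add_succ (a : ℕ → M) (n : ℕ) :
    ∑ m ∈ range n, (-1 : R) ^ m • (a m + a (m + 1)) = a 0 - (-1 : R) ^ n • a n := by
  induction n with
  | zero => simp
  | succ n ih =>
    rw [sum_range_succ, ih, pow_succ, smul_add, mul_neg_one, neg_smul]
    abel

end AlternatingSums

theorem wd_append (l₁ l₂ : List (Fin 2)) : wd (l₁ ++ l₂) = wd l₁ * wd l₂ := by
  simp [wd]

theorem wd_cons (a : Fin 2) (l : List (Fin 2)) : wd (a :: l) = wd [a] * wd l :=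
  wd_append [a] l

theorem wd_replicate_one (n : ℕ) : wd (List.replicate n 1) = wy ^ n := by
  induction n with
  | zero => rfl
  | succ n ih => rw [List.replicate_succ, wd_cons, ih, pow_succ']; rfl

theorem tshH_wd (l₁ l₂ : List (Fin 2)) : tshH (wd l₁) (wd l₂) = tshW l₁ l₂ := by
  simp [tshH, wd, MonoidAlgebra.of_apply, MonoidAlgebra.coeff_single]

theorem tshW_nil_left (w : List (Fin 2)) : tshW [] w = wd w := by
  rw [tshW]

theorem tshW_nil_right (w : List (Fin 2)) : tshW w [] = wd w := by
  cases w <;> rw [tshW]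

theorem tshW_comm (w₁ w₂ : List (Fin 2)) : tshW w₁ w₂ = tshW w₂ w₁ := by
  induction w₁, w₂ using tshW.induct with
  | case1 w => rw [tshW_nil_left, tshW_nil_right]
  | case2 a w => rw [tshW_nil_left, tshW_nil_right]
  | case3 a w₁ b w₂ ih₁ ih₂ =>
    rw [tshW, tshW, ih₁, ih₂]
    abel

theorem tshW_cons_cons {w₁ w₂ : List (Fin 2)} (h₁ : w₁ ≠ []) (h₂ : w₂ ≠ []) (a b : Fin 2) :
    tshW (a :: w₁) (b :: w₂) =
      wd [a] * tshW w₁ (b :: w₂) + wd [b] * tshW (a :: w₁) w₂ := by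
  rw [tshW]
  simp [δw, h₁, h₂]

def ySubTx : Ht := wy - (Polynomial.X : Rt) • wx

theorem tshW_y_cons {w : List (Fin 2)} (h : w ≠ []) (b : Fin 2) :
    tshW [1] (b :: w) = ySubTx * wd (b :: w) + wd [b] * tshW [1] w := by
  rw [tshW]
  simp only [δw, h, ρt, ySubTx, tshW_nil_left, sub_mul, smul_mul_assoc, if_true, if_false,
    one_smul, zero_smul, sub_zero]
  rw [← wy]
  abel

theorem tshW_y_y : tshW [1] [1] = (2 : Rt) • (ySubTx * wy) := by
  rw [tshW]
  simp only [δw, ρt, ySubTx, tshW_nil_left, tshW_nil_right, sub_mul, smul_mul_assoc, if_true,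
    one_smul]
  rw [← wy, two_smul]
  abel

theorem zzw_one : zzw 1 = wy := by
  simp [zzw]

theorem zzw_two_mul_wy_pow (j : ℕ) : zzw 2 * wy ^ j = wd (0 :: List.replicate (j + 1) 1) := by
  rw [wd_cons, wd_replicate_one, pow_succ', zzw, pow_one, mul_assoc]
  rfl

theorem sum_antidiagonal_tshW_replicate (n : ℕ) :
    ∑ p ∈ antidiagonal n, (-1 : Rt) ^ p.1 •
        tshW (List.replicate (p.1 + 1) 1) (List.replicate (p.2 + 1) 1) =
      (1 + (-1 : Rt) ^ n) • (ySubTx * wy ^ (n + 1)) := by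
  have hl : ∀ b, tshW (List.replicate 1 1) (List.replicate (b + 2) 1) =
      ySubTx * wy ^ (b + 2) + wy * tshW (List.replicate 1 1) (List.replicate (b + 1) 1) := by
    intro b
    rw [List.replicate_one, List.replicate_succ, tshW_y_cons (by simp), ← List.replicate_succ,
      wd_replicate_one]
    rfl
  refine sum_antidiagonal_neg_one_pow_smul_of_pascal (LinearMap.mulLeft Rt wy)
    (fun a b => tshW (List.replicate (a + 1) 1) (List.replicate (b + 1) 1))
    (fun m => ySubTx * wy ^ (m + 1)) ?_ hl (fun a => ?_) (fun a b => ?_) n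
  · simpa using tshW_y_y
  · rw [tshW_comm _ (List.replicate (0 + 1) 1), tshW_comm _ (List.replicate (0 + 1) 1)]
    exact hl a
  · rw [List.replicate_succ (n := a + 1), List.replicate_succ (n := b + 1),
      tshW_cons_cons (by simp) (by simp)]
    rfl

theorem sum_antidiagonal_tshW_replicate_x_replicate (n : ℕ) :
    ∑ p ∈ antidiagonal n, (-1 : Rt) ^ p.1 •
        tshW (List.replicate (p.1 + 1) 1) (0 :: List.replicate (p.2 + 1) 1) =
      ∑ q ∈ antidiagonal n, (-1 : Rt) ^ q.1 • (wy ^ q.1 * (ySubTx * wx * wy ^ (q.2 + 1) +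
        wx * ((1 + (-1 : Rt) ^ q.2) • (ySubTx * wy ^ (q.2 + 1))))) := by
  rw [sum_antidiagonal_neg_one_pow_smul_of_succ_left (LinearMap.mulLeft Rt wy)
    (fun a b => tshW (List.replicate (a + 1) 1) (0 :: List.replicate (b + 1) 1))
    (fun a b => wx * tshW (List.replicate (a + 1) 1) (List.replicate (b + 1) 1))
    (fun b => ySubTx * wx * wy ^ (b + 1)) (fun b => ?_) (fun a b => ?_)]
  · simp only [LinearMap.pow_mulLeft, LinearMap.mulLeft_apply, ← mul_smul_comm, ← mul_sum,
      sum_antidiagonal_tshW_replicate]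
  · rw [List.replicate_one, tshW_y_cons (by simp), wd_cons, wd_replicate_one, mul_assoc]
    rfl
  · rw [List.replicate_succ (n := a + 1), tshW_cons_cons (by simp) (by simp)]
    rfl

theorem tshW_x_replicate_x_replicate (a b : ℕ) :
    tshW (0 :: List.replicate (a + 1) 1) (0 :: List.replicate (b + 1) 1) =
      wx * tshW (List.replicate (a + 1) 1) (0 :: List.replicate (b + 1) 1) +
        wx * tshW (List.replicate (b + 1) 1) (0 :: List.replicate (a + 1) 1) := by
  rw [tshW_cons_cons (by simp) (by simp), tshW_comm (0 :: _)]
  rfl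

theorem sum_range_tshW_x_replicate {k : ℕ} (hk : Even k) :
    ∑ j ∈ range (k + 1), (-1 : Rt) ^ j •
        tshW (0 :: List.replicate (j + 1) 1) (0 :: List.replicate (k - j + 1) 1) =
      (2 : Rt) • (wx * ∑ p ∈ antidiagonal k, (-1 : Rt) ^ p.1 •
        tshW (List.replicate (p.1 + 1) 1) (0 :: List.replicate (p.2 + 1) 1)) := by
  rw [← Nat.sum_antidiagonal_eq_sum_range_succ (fun i j => (-1 : Rt) ^ i •
    tshW (0 :: List.replicate (i + 1) 1) (0 :: List.replicate (j + 1) 1))]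
  simp only [tshW_x_replicate_x_replicate, smul_add, sum_add_distrib, mul_sum, mul_smul_comm]
  rw [two_smul]
  refine congrArg (_ + ·) ?_
  rw [← Nat.sum_antidiagonal_swap]
  refine sum_congr rfl fun p hp => ?_
  rw [HasAntidiagonal.mem_antidiagonal] at hp
  rw [Prod.fst_swap, Prod.snd_swap, neg_one_pow_congr (Nat.even_add.mp (hp ▸ hk)).symm]

def xyx (m r : ℕ) : Ht := wx * wy ^ m * wx * wy ^ r

def xyxx (m r : ℕ) : Ht := wx * wy ^ m * wx * wx * wy ^ r

theorem zzw_three_mul_wy_pow (j : ℕ) : zzw 3 * wy ^ j = xyx 0 (j + 1) := by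
  simp only [xyx, zzw, pow_succ', pow_zero, mul_one, mul_assoc]

theorem zzw_four_mul_wy_pow (j : ℕ) : zzw 4 * wy ^ j = xyxx 0 (j + 1) := by
  simp only [xyxx, zzw, pow_succ', pow_zero, mul_one, mul_assoc]

theorem zzw_two_mul_wy_pow_mul_zzw_two_mul_wy_pow (i j : ℕ) :
    zzw 2 * wy ^ i * zzw 2 * wy ^ j = xyx (i + 1) (j + 1) := by
  simp only [xyx, zzw, pow_succ', pow_zero, mul_one, mul_assoc]

theorem zzw_two_mul_wy_pow_mul_zzw_three_mul_wy_pow (i j : ℕ) :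
    zzw 2 * wy ^ i * zzw 3 * wy ^ j = xyxx (i + 1) (j + 1) := by
  simp only [xyxx, zzw, pow_succ', pow_zero, mul_one, mul_assoc]

theorem wx_mul_wy_pow_mul_ySubTx_expand (m r : ℕ) :
    wx * (wy ^ m * (ySubTx * wx * wy ^ (r + 1) +
        wx * ((1 + (-1 : Rt) ^ r) • (ySubTx * wy ^ (r + 1))))) =
      xyx (m + 1) (r + 1) + (1 + (-1 : Rt) ^ r) • xyx m (r + 2) -
        (Polynomial.X : Rt) • ((2 + (-1 : Rt) ^ r) • xyxx m (r + 1)) := by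
  simp only [xyx, xyxx, ySubTx, sub_mul, mul_sub, mul_add, mul_smul_comm, smul_mul_assoc,
    smul_sub, mul_assoc, ← pow_succ', add_smul, one_smul]
  rw [← mul_assoc (wy ^ m) wy, ← pow_succ]
  module

theorem wx_mul_sum_antidiagonal_eq_sum_range {k : ℕ} (hk : Even k) :
    wx * ∑ p ∈ antidiagonal k, (-1 : Rt) ^ p.1 • (wy ^ p.1 * (ySubTx * wx * wy ^ (p.2 + 1) +
        wx * ((1 + (-1 : Rt) ^ p.2) • (ySubTx * wy ^ (p.2 + 1))))) =
      ∑ m ∈ range (k + 1), ((-1 : Rt) ^ m • (xyx m (k + 2 - m) + xyx (m + 1) (k + 2 - (m + 1))) +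
        xyx m (k + 2 - m) -
          (Polynomial.X : Rt) • ((2 * (-1 : Rt) ^ m + 1) • xyxx m (k + 1 - m))) := by
  rw [mul_sum, Nat.sum_antidiagonal_eq_sum_range_succ_mk]
  refine sum_congr rfl fun m hm => ?_
  obtain ⟨r, rfl⟩ := Nat.exists_eq_add_of_le (Nat.lt_succ_iff.mp (mem_range.mp hm))
  rw [mul_smul_comm, Nat.add_sub_cancel_left, wx_mul_wy_pow_mul_ySubTx_expand,
    neg_one_pow_congr (Nat.even_add.mp hk).symm, show m + r + 2 - m = r + 2 by omega,
    show m + r + 2 - (m + 1) = r + 1 by omega, show m + r + 1 - m = r + 1 by omega]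
  have hsq : (-1 : Rt) ^ m * (-1) ^ m = 1 := by rw [← mul_pow]; simp
  match_scalars
  · ring
  · linear_combination hsq
  · linear_combination (-Polynomial.X : Rt) * hsq

theorem sum_range_xyx_xyxx_eq {k : ℕ} (hk : Even k) :
    ∑ m ∈ range (k + 1), ((-1 : Rt) ^ m • (xyx m (k + 2 - m) + xyx (m + 1) (k + 2 - (m + 1))) +
        xyx m (k + 2 - m) -
          (Polynomial.X : Rt) • ((2 * (-1 : Rt) ^ m + 1) • xyxx m (k + 1 - m))) =
      (2 : Rt) • (zzw 3 * wy ^ (k + 1)) +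
        ∑ i ∈ range (k + 1), zzw 2 * wy ^ i * zzw 2 * wy ^ (k - i) +
        (Polynomial.X : Rt) • ∑ i ∈ range k,
          (2 * (-1 : Rt) ^ i - 1) • (zzw 2 * wy ^ i * zzw 3 * wy ^ (k - i - 1)) -
        (3 * Polynomial.X : Rt) • (zzw 4 * wy ^ k) := by
  have hxyx : ∑ i ∈ range (k + 1), zzw 2 * wy ^ i * zzw 2 * wy ^ (k - i) =
      ∑ i ∈ range (k + 1), xyx (i + 1) (k + 2 - (i + 1)) := by
    refine sum_congr rfl fun i hi => ?_
    rw [zzw_two_mul_wy_pow_mul_zzw_two_mul_wy_pow, show k + 2 - (i + 1) = k - i + 1 by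
      have := mem_range.mp hi; omega]
  have hxyxx : ∑ i ∈ range k,
      (2 * (-1 : Rt) ^ i - 1) • (zzw 2 * wy ^ i * zzw 3 * wy ^ (k - i - 1)) =
      -∑ i ∈ range k, (2 * (-1 : Rt) ^ (i + 1) + 1) • xyxx (i + 1) (k + 1 - (i + 1)) := by
    rw [← sum_neg_distrib]
    refine sum_congr rfl fun i hi => ?_
    rw [← neg_smul, pow_succ, show -(2 * ((-1 : Rt) ^ i * -1) + 1) = 2 * (-1) ^ i - 1 by ring,
      zzw_two_mul_wy_pow_mul_zzw_three_mul_wy_pow, show k + 1 - (i + 1) = k - i - 1 + 1 by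
        have := mem_range.mp hi; omega]
  simp only [sum_add_distrib, sum_sub_distrib, ← smul_sum,
    sum_range_neg_one_pow_smul_add_succ (fun m => xyx m (k + 2 - m)), (hk.add_one).neg_one_pow]
  rw [zzw_three_mul_wy_pow, zzw_four_mul_wy_pow, hxyx, hxyxx,
    sum_range_succ (fun i => xyx (i + 1) (k + 2 - (i + 1))),
    sum_range_succ' (fun m => xyx m (k + 2 - m)),
    sum_range_succ' (fun m => (2 * (-1 : Rt) ^ m + 1) • xyxx m (k + 1 - m))]
  simp only [Nat.sub_zero, Nat.add_sub_add_right]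
  module

theorem sum_antidiagonalTuple_zzw (k : ℕ) :
    ∑ a ∈ Finset.Nat.antidiagonalTuple (k + 2) 1,
        ((a (Fin.last (k + 1)) + 1 : ℕ) : Rt) •
          (zzw (a (Fin.last (k + 1)) + 2) *
            (List.ofFn fun j : Fin (k + 1) => zzw (a j.castSucc + 1)).prod) =
      (2 : Rt) • (zzw 3 * wy ^ (k + 1)) +
        ∑ i ∈ range (k + 1), zzw 2 * wy ^ i * zzw 2 * wy ^ (k - i) := by
  rw [Nat.sum_antidiagonalTuple_one_right, Fin.sum_univ_castSucc, add_comm]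
  refine congrArg₂ (· + ·) ?_ ?_
  · simp [Fin.castSucc_ne_last, zzw_one, one_add_one_eq_two, ← pow_succ']
  · rw [← Fin.sum_univ_eq_sum_range (fun i => zzw 2 * wy ^ i * zzw 2 * wy ^ (k - i))]
    refine sum_congr rfl fun i _ => ?_
    have hfun : (fun j : Fin (k + 1) =>
        zzw ((Pi.single i.castSucc 1 : Fin (k + 2) → ℕ) j.castSucc + 1)) =
          Function.update (fun _ => wy) i (zzw 2) := by
      funext j
      by_cases hj : j = i
      · subst hj; simp
      · simp [hj, zzw_one]
    rw [hfun, List.ofFn_update_const]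
    simp [(Fin.castSucc_lt_last i).ne', List.prod_append, mul_assoc]

theorem alt_sum_even_general (k : ℕ) (hk : Even k) :
    ∑ j ∈ Finset.range (k + 1),
      ((-1 : Rt) ^ j) • tshH (zzw 2 * wy ^ j) (zzw 2 * wy ^ (k - j)) =
    (2 : Rt) •
      ((∑ a ∈ Finset.Nat.antidiagonalTuple (k + 2) 1,
          ((a (Fin.last (k + 1)) + 1 : ℕ) : Rt) •
            (zzw (a (Fin.last (k + 1)) + 2) *
              (List.ofFn fun j : Fin (k + 1) => zzw (a j.castSucc + 1)).prod)) +
        (Polynomial.X : Rt) •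
          (∑ i ∈ Finset.range k,
            (2 * (-1 : Rt) ^ i - 1) • (zzw 2 * wy ^ i * zzw 3 * wy ^ (k - i - 1))) -
        (3 * Polynomial.X : Rt) • (zzw 4 * wy ^ k)) := by
  conv_lhs => simp only [zzw_two_mul_wy_pow, tshH_wd]
  rw [sum_range_tshW_x_replicate hk, sum_antidiagonal_tshW_replicate_x_replicate,
    wx_mul_sum_antidiagonal_eq_sum_range hk, sum_range_xyx_xyxx_eq hk, sum_antidiagonalTuple_zzw]

/-- For even positive `k`,
`Σ_{j=0}^{k} (−1)^j (z₂z₁^j ⧢_t z₂z₁^{k−j})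
 = 2[ Σ_{a₁+⋯+a_{k+2}=1} (a_{k+2}+1) z_{a_{k+2}+2} z_{a₁+1}⋯z_{a_{k+1}+1}
     + t Σ_{i=0}^{k−1} (2(−1)^i−1) z₂z₁^i z₃ z₁^{k−i−1} − 3t z₄ z₁^k ]`. -/
theorem alt_sum_even (k : ℕ) (hk : Even k) (hk0 : 0 < k) :
    ∑ j ∈ Finset.range (k + 1),
      ((-1 : Rt) ^ j) • tshH (zzw 2 * wy ^ j) (zzw 2 * wy ^ (k - j)) =
    (2 : Rt) •
      ((∑ a ∈ Finset.Nat.antidiagonalTuple (k + 2) 1,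
          ((a (Fin.last (k + 1)) + 1 : ℕ) : Rt) •
            (zzw (a (Fin.last (k + 1)) + 2) *
              (List.ofFn fun j : Fin (k + 1) => zzw (a j.castSucc + 1)).prod)) +
        (Polynomial.X : Rt) •
          (∑ i ∈ Finset.range k,
            (2 * (-1 : Rt) ^ i - 1) • (zzw 2 * wy ^ i * zzw 3 * wy ^ (k - i - 1))) -
        (3 * Polynomial.X : Rt) • (zzw 4 * wy ^ k)) :=
  alt_sum_even_general k hk
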